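/- arXiv:1410.0150 — 3 statements merged into one kernel-verified Lean document; each statement's English description precedes it below -/
import Mathlib

section
/- Let $B$ be a graded integral domain over a field $k$, finitely generated and non-negatively graded with $B_0 = k$, and let $I \subseteq B_+$ be a homogeneous ideal. If the maximal degree of a minimal generator of $I$ is at least the maximal degree of a minimal first syzygy of $I$ (i.e.\ $t^B_1(I) \leq t^B_0(I)$), then $I$ is a principal ideal. -/
/-!
Take a generator `f l₀` of maximal degree `d`. A minimal syzygy has degree at most `d`, so its
`l₀`-th coordinate has degree `≤ 0`, i.e. is a scalar; a nonzero scalar would be a unit and express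
`f l₀` through the other generators, contradicting minimality. Hence every syzygy vanishes at `l₀`.
With a second generator `f l₁`, the Koszul syzygy `f l₁ e_{l₀} - f l₀ e_{l₁}` then forces
`f l₁ = 0`, again contradicting minimality; so there is at most one generator.
-/

theorem Ideal.isPrincipal_span_range_of_subsingleton {R ι : Type*} [CommRing R] [Subsingleton ι]
    (f : ι → R) : (Ideal.span (Set.range f)).IsPrincipal := by
  rcases isEmpty_or_nonempty ι with hι | hι
  · rw [Set.range_eq_empty, Ideal.span_empty]
    exact bot_isPrincipal
  · obtain ⟨i⟩ := id hι
    refine ⟨f i, ?_⟩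
    rw [Set.range_eq_singleton fun j => congrArg f (Subsingleton.elim j i)]

section Syzygy

variable {R ι : Type*} [CommRing R] [Fintype ι] [DecidableEq ι] (f : ι → R)

theorem koszul_mem_ker_linearCombination (i j : ι) :
    Pi.single i (f j) - Pi.single j (f i) ∈ LinearMap.ker (Fintype.linearCombination R f) := by
  rw [LinearMap.mem_ker, map_sub, Fintype.linearCombination_apply_single,
    Fintype.linearCombination_apply_single, smul_eq_mul, smul_eq_mul, mul_comm, sub_self]

theorem mem_span_image_ne_of_isUnit_of_mem_ker {v : ι → R}
    (hv : v ∈ LinearMap.ker (Fintype.linearCombination R f)) {i : ι} (hi : IsUnit (v i)) :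
    f i ∈ Ideal.span (f '' {l | l ≠ i}) := by
  obtain ⟨u, hu⟩ := hi
  have hsyz : v i * f i = -∑ l ∈ Finset.univ.erase i, v l * f l := by
    rw [eq_neg_iff_add_eq_zero, add_comm, Finset.sum_erase_add _ _ (Finset.mem_univ i)]
    simpa [Fintype.linearCombination_apply] using hv
  have hfi : f i = ↑u⁻¹ * (v i * f i) := by rw [← hu, Units.inv_mul_cancel_left]
  rw [hfi, hsyz]
  refine Ideal.mul_mem_left _ _ (neg_mem (Ideal.sum_mem _ fun l hl => ?_))
  exact Ideal.mul_mem_left _ _ (Ideal.subset_span ⟨l, Finset.ne_of_mem_erase hl, rfl⟩)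

theorem eq_zero_of_forall_mem_ker_apply_eq_zero {i : ι}
    (h : ∀ v ∈ LinearMap.ker (Fintype.linearCombination R f), v i = 0) {j : ι} (hj : j ≠ i) :
    f j = 0 := by
  simpa [hj] using h _ (koszul_mem_ker_linearCombination f i j)

end Syzygy

theorem eq_zero_of_mem_span_one_of_not_isUnit {k B : Type*} [Field k] [Ring B] [Algebra k B]
    {x : B} (hx : x ∈ Submodule.span k {(1 : B)}) (hu : ¬IsUnit x) : x = 0 := by
  obtain ⟨c, rfl⟩ := Submodule.mem_span_singleton.mp hx
  rcases eq_or_ne c 0 with rfl | hc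
  · exact zero_smul k 1
  · rw [← Algebra.algebraMap_eq_smul_one] at hu ⊢
    exact absurd ((isUnit_iff_ne_zero.mpr hc).map (algebraMap k B)) hu

theorem principal_of_syzygy_degree_le_generator_degree_general
    (k B : Type) [Field k] [CommRing B] [Algebra k B]
    (𝒜 : ℕ → Submodule k B)
    (h0 : 𝒜 0 ≤ Submodule.span k {(1 : B)})
    (I : Ideal B)
    -- `t¹_B(I) ≤ t⁰_B(I)`: a minimal homogeneous generating family whose syzygy module is
    -- generated by homogeneous syzygies of degrees at most the top degree of a generator
    (hsyz : ∃ (r : ℕ) (f : Fin r → B) (dv : Fin r → ℕ),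
      (∀ l, f l ∈ 𝒜 (dv l)) ∧ Ideal.span (Set.range f) = I ∧
      (∀ l, f l ∉ Ideal.span (f '' {l' | l' ≠ l})) ∧
      ∃ (s : ℕ) (σ : Fin s → (Fin r → B)) (tv : Fin s → ℕ),
        (∀ a, tv a ≤ Finset.univ.sup dv) ∧
        (∀ a l, if dv l ≤ tv a then σ a l ∈ 𝒜 (tv a - dv l) else σ a l = 0) ∧
        Submodule.span B (Set.range σ) = LinearMap.ker (Fintype.linearCombination B f)) :
    Submodule.IsPrincipal I := by
  obtain ⟨r, f, dv, -, rfl, hmin, s, σ, tv, htv, hσ, hker⟩ := hsyz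
  rcases subsingleton_or_nontrivial (Fin r) with hr | hr
  · exact Ideal.isPrincipal_span_range_of_subsingleton f
  exfalso
  obtain ⟨l₀, -, hl₀⟩ := Finset.exists_max_image Finset.univ dv Finset.univ_nonempty
  have hσ₀ : ∀ a, σ a l₀ = 0 := by
    intro a
    have hdeg : tv a ≤ dv l₀ := (htv a).trans (Finset.sup_le fun l _ => hl₀ l (Finset.mem_univ l))
    have hσa : σ a ∈ LinearMap.ker (Fintype.linearCombination B f) :=
      hker ▸ Submodule.subset_span ⟨a, rfl⟩
    have hσal₀ := hσ a l₀
    split_ifs at hσal₀ with hle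
    · rw [show tv a - dv l₀ = 0 by omega] at hσal₀
      exact eq_zero_of_mem_span_one_of_not_isUnit (h0 hσal₀)
        fun hu => hmin l₀ (mem_span_image_ne_of_isUnit_of_mem_ker f hσa hu)
    · exact hσal₀
  have hker₀ : ∀ v ∈ LinearMap.ker (Fintype.linearCombination B f), v l₀ = 0 := by
    rw [← hker]
    exact fun v hv => (Submodule.span_le (p := LinearMap.ker (LinearMap.proj l₀)) |>.mpr
      (Set.range_subset_iff.mpr hσ₀)) hv
  obtain ⟨l₁, hl₁⟩ := exists_ne l₀
  apply hmin l₁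
  rw [eq_zero_of_forall_mem_ker_apply_eq_zero f hker₀ hl₁]
  exact Ideal.zero_mem _

/-- let `B` be a finitely generated non-negatively graded domain over a field `k`
with `B₀ = k`, and `I ⊆ B₊` a homogeneous ideal.  If `t¹_B(I) ≤ t⁰_B(I)`, i.e. the syzygy
module of a minimal homogeneous generating family of `I` is generated in degrees at most the
maximal degree of the generators, then `I` is principal. -/
theorem principal_of_syzygy_degree_le_generator_degree
    (k B : Type) [Field k] [CommRing B] [IsDomain B] [Algebra k B]
    (𝒜 : ℕ → Submodule k B) [GradedAlgebra 𝒜]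
    -- `B` is finitely generated over `k`, with only `k` in degree `0`
    (hFG : (⊤ : Subalgebra k B).FG)
    (h0 : 𝒜 0 ≤ Submodule.span k {(1 : B)})
    (I : Ideal B)
    -- `I` is homogeneous and contained in `B₊`
    (hIhom : Ideal.IsHomogeneous 𝒜 I)
    (hIpos : ∀ x ∈ I, (DirectSum.decompose 𝒜 x 0 : B) = 0)
    -- `t¹_B(I) ≤ t⁰_B(I)`: a minimal homogeneous generating family whose syzygy module is
    -- generated by homogeneous syzygies of degrees at most the top degree of a generator
    (hsyz : ∃ (r : ℕ) (f : Fin r → B) (dv : Fin r → ℕ),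
      (∀ l, f l ∈ 𝒜 (dv l)) ∧ Ideal.span (Set.range f) = I ∧
      (∀ l, f l ∉ Ideal.span (f '' {l' | l' ≠ l})) ∧
      ∃ (s : ℕ) (σ : Fin s → (Fin r → B)) (tv : Fin s → ℕ),
        (∀ a, tv a ≤ Finset.univ.sup dv) ∧
        (∀ a l, if dv l ≤ tv a then σ a l ∈ 𝒜 (tv a - dv l) else σ a l = 0) ∧
        Submodule.span B (Set.range σ) = LinearMap.ker (Fintype.linearCombination B f)) :
    Submodule.IsPrincipal I :=
  principal_of_syzygy_degree_le_generator_degree_general k B 𝒜 h0 I hsyz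
end

section
/- Let $B$ be a standard graded polynomial ring over a field $k$, $C \subseteq B$ a graded subring such that the inclusion $C \hookrightarrow B$ is split as a map of $C$-modules, and set $I := C_+ B$ (the ideal of $B$ generated by elements of $C$ of positive degree). Let $e := \sup\{j : (B/I)_j \neq 0\}$ and suppose $e < \infty$. Then for any set of homogeneous algebra generators of $C$, the subset consisting of those generators of degree at most $e + 1$ already generates $C$ as a $k$-algebra. -/
/-!
Let `D` be the subalgebra generated by the generators of degree `≤ e + 1`; by strong induction
on `d`, every homogeneous `c ∈ C` of degree `d` lies in `D`. For `d ≤ e + 1` this is because the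
degree-`d` part of a polynomial in `S` only involves generators of degree `≤ d`.
For `d = j + 1 > e + 1`, write `c = ∑ xᵢ qᵢ` with `qᵢ` of degree `j > e`, so `qᵢ ∈ C₊B`; taking
degree-`d` parts, `c = ∑ rₗ gₗ` with `gₗ ∈ C` homogeneous of degree `0 < aₗ < d` (the factor `xᵢ`
excludes `aₗ = d`). Applying the splitting `π` and taking degree-`d` parts once more gives
`c = ∑ gₗ (π rₗ)_{d - aₗ}`, a product of elements of `C` of degree `< d`, which lie in `D`.
-/

open MvPolynomial

namespace MvPolynomial

variable {σ R : Type*} [CommSemiring R]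

section GradedAlgebra

attribute [local instance] gradedAlgebra

lemma homogeneousComponent_mul_of_isHomogeneous_of_le {g : MvPolynomial σ R} {a n : ℕ}
    (hg : g.IsHomogeneous a) (h : a ≤ n) (x : MvPolynomial σ R) :
    homogeneousComponent n (g * x) = g * homogeneousComponent (n - a) x := by
  rw [← decomposition.decompose'_apply, ← decomposition.decompose'_apply]
  exact DirectSum.coe_decompose_mul_of_left_mem_of_le _ ((mem_homogeneousSubmodule _ _).2 hg) h

lemma homogeneousComponent_mul_of_isHomogeneous_of_lt {g : MvPolynomial σ R} {a n : ℕ}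
    (hg : g.IsHomogeneous a) (h : n < a) (x : MvPolynomial σ R) :
    homogeneousComponent n (g * x) = 0 := by
  rw [← decomposition.decompose'_apply]
  exact DirectSum.coe_decompose_mul_of_left_mem_of_not_le _
    ((mem_homogeneousSubmodule _ _).2 hg) h.not_ge

end GradedAlgebra

lemma adjoin_setOf_isHomogeneous_le_mono {S : Set (MvPolynomial σ R)} {a b : ℕ} (h : a ≤ b) :
    Algebra.adjoin R {s ∈ S | ∃ i ≤ a, s.IsHomogeneous i} ≤
      Algebra.adjoin R {s ∈ S | ∃ i ≤ b, s.IsHomogeneous i} :=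
  Algebra.adjoin_mono fun _ ⟨hs, i, hi, hsi⟩ => ⟨hs, i, hi.trans h, hsi⟩

lemma exists_isHomogeneous_mem_adjoin_of_mem_closure {S : Set (MvPolynomial σ R)}
    (hS : ∀ s ∈ S, ∃ d, s.IsHomogeneous d) {m : MvPolynomial σ R}
    (hm : m ∈ Submonoid.closure S) :
    ∃ d, m.IsHomogeneous d ∧ m ∈ Algebra.adjoin R {s ∈ S | ∃ i ≤ d, s.IsHomogeneous i} := by
  induction hm using Submonoid.closure_induction with
  | mem s hs =>
    obtain ⟨d, hd⟩ := hS s hs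
    exact ⟨d, hd, Algebra.subset_adjoin ⟨hs, d, le_rfl, hd⟩⟩
  | one => exact ⟨0, isHomogeneous_one _ _, one_mem _⟩
  | mul x y _ _ hx hy =>
    obtain ⟨a, ha, hxa⟩ := hx
    obtain ⟨b, hb, hyb⟩ := hy
    exact ⟨a + b, ha.mul hb, mul_mem (adjoin_setOf_isHomogeneous_le_mono (by omega) hxa)
      (adjoin_setOf_isHomogeneous_le_mono (by omega) hyb)⟩

lemma homogeneousComponent_mem_adjoin {S : Set (MvPolynomial σ R)}
    (hS : ∀ s ∈ S, ∃ d, s.IsHomogeneous d) {p : MvPolynomial σ R} (hp : p ∈ Algebra.adjoin R S)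
    (d : ℕ) :
    homogeneousComponent d p ∈ Algebra.adjoin R {s ∈ S | ∃ i ≤ d, s.IsHomogeneous i} := by
  rw [← Subalgebra.mem_toSubmodule, Algebra.adjoin_eq_span] at hp
  induction hp using Submodule.span_induction with
  | mem m hm =>
    obtain ⟨a, ha, hma⟩ := exists_isHomogeneous_mem_adjoin_of_mem_closure hS hm
    rw [homogeneousComponent_of_mem ((mem_homogeneousSubmodule _ _).2 ha)]
    split_ifs with had
    · exact had ▸ hma
    · exact zero_mem _
  | zero => simp
  | add x y _ _ hx hy => rw [map_add]; exact add_mem hx hy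
  | smul r x _ hx => rw [map_smul]; exact Subalgebra.smul_mem _ hx r

lemma mem_ker_constantCoeff_mul_of_isHomogeneous {J : Ideal (MvPolynomial σ R)} {j : ℕ}
    (hJ : ∀ q : MvPolynomial σ R, q.IsHomogeneous j → q ∈ J) {p : MvPolynomial σ R}
    (hp : p.IsHomogeneous (j + 1)) :
    p ∈ RingHom.ker (constantCoeff : MvPolynomial σ R →+* R) * J := by
  rw [← mem_homogeneousSubmodule, ← homogeneousSubmodule_one_pow, pow_succ',
    homogeneousSubmodule_one_pow] at hp
  refine Submodule.mul_induction_on hp (fun m hm q hq => Ideal.mul_mem_mul ?_ (hJ q hq))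
    fun _ _ => add_mem
  rw [RingHom.mem_ker, constantCoeff_eq]
  exact ((mem_homogeneousSubmodule _ _).1 hm).coeff_eq_zero (by simp)

lemma homogeneousComponent_mem_span_of_mem_ker_constantCoeff_mul
    {T : ℕ → Set (MvPolynomial σ R)} (hT : ∀ a, ∀ t ∈ T a, t.IsHomogeneous a)
    {x : MvPolynomial σ R}
    (hx : x ∈ RingHom.ker (constantCoeff : MvPolynomial σ R →+* R) * Ideal.span (⋃ a, T a))
    (d : ℕ) : homogeneousComponent d x ∈ Ideal.span (⋃ a < d, T a) := by
  refine Submodule.mul_induction_on hx (fun m hm y hy => ?_)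
    fun y z hy hz => by rw [map_add]; exact add_mem hy hz
  induction hy using Submodule.span_induction generalizing m with
  | mem t ht =>
    obtain ⟨a, ht⟩ := Set.mem_iUnion.1 ht
    rw [mul_comm]
    rcases lt_trichotomy a d with had | rfl | hda
    · rw [homogeneousComponent_mul_of_isHomogeneous_of_le (hT a t ht) had.le]
      exact Ideal.mul_mem_right _ _ (Ideal.subset_span (Set.mem_iUnion₂.2 ⟨a, had, ht⟩))
    · rw [homogeneousComponent_mul_of_isHomogeneous_of_le (hT a t ht) le_rfl, Nat.sub_self,
        homogeneousComponent_zero, ← constantCoeff_eq, hm, C_0, mul_zero]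
      exact zero_mem _
    · rw [homogeneousComponent_mul_of_isHomogeneous_of_lt (hT a t ht) hda]
      exact zero_mem _
  | zero => simp
  | add y z _ _ hy hz => rw [mul_add, map_add]; exact add_mem (hy m hm) (hz m hm)
  | smul r y _ hy => rw [smul_eq_mul, ← mul_assoc]; exact hy _ (Ideal.mul_mem_right r _ hm)

section Subalgebra

variable {C : Subalgebra R (MvPolynomial σ R)}

lemma span_constantCoeff_eq_zero_le_span_isHomogeneous_pos
    (hC : ∀ c ∈ C, ∀ d, homogeneousComponent d c ∈ C) :
    Ideal.span ((C : Set (MvPolynomial σ R)) ∩ {b | constantCoeff b = 0}) ≤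
      Ideal.span (⋃ a, {g ∈ C | 0 < a ∧ g.IsHomogeneous a}) := by
  rw [Ideal.span_le]
  rintro g ⟨hgC, hg0⟩
  rw [SetLike.mem_coe, ← sum_homogeneousComponent g]
  refine Ideal.sum_mem _ fun i _ => ?_
  rcases Nat.eq_zero_or_pos i with rfl | hi
  · rw [homogeneousComponent_zero, ← constantCoeff_eq, hg0, C_0]
    exact zero_mem _
  · exact Ideal.subset_span
      (Set.mem_iUnion.2 ⟨i, hC g hgC i, hi, homogeneousComponent_isHomogeneous i g⟩)

lemma mem_adjoin_of_mem_span_of_isHomogeneous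
    (hC : ∀ c ∈ C, ∀ d, homogeneousComponent d c ∈ C)
    (π : MvPolynomial σ R →ₗ[C] C) (hπ : ∀ c : C, π c = c) {c : MvPolynomial σ R} {d : ℕ}
    (hc : c ∈ C) (hcd : c.IsHomogeneous d)
    (hspan : c ∈ Ideal.span (⋃ a < d, {g ∈ C | 0 < a ∧ g.IsHomogeneous a})) :
    c ∈ Algebra.adjoin R (⋃ a < d, {g ∈ C | g.IsHomogeneous a}) := by
  suffices h : ∀ r, homogeneousComponent d (π (r * c) : MvPolynomial σ R) ∈
      Algebra.adjoin R (⋃ a < d, {g ∈ C | g.IsHomogeneous a}) by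
    simpa [hπ ⟨c, hc⟩, homogeneousComponent_eq_self hcd] using h 1
  clear hc hcd
  induction hspan using Submodule.span_induction with
  | mem t ht =>
    obtain ⟨a, had, htC, ha, hta⟩ := Set.mem_iUnion₂.1 ht
    intro r
    have hπt : π (r * t) = (⟨t, htC⟩ : C) * π r := by
      rw [← smul_eq_mul (a := (⟨t, htC⟩ : C)), ← map_smul, Subalgebra.smul_def, smul_eq_mul,
        mul_comm]
    rw [hπt, Subalgebra.coe_mul, homogeneousComponent_mul_of_isHomogeneous_of_le hta had.le]
    refine mul_mem (Algebra.subset_adjoin (Set.mem_iUnion₂.2 ⟨a, had, htC, hta⟩))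
      (Algebra.subset_adjoin (Set.mem_iUnion₂.2 ⟨d - a, by omega, ?_⟩))
    exact ⟨hC _ (π r).2 _, homogeneousComponent_isHomogeneous _ _⟩
  | zero => simp
  | add x y _ _ hx hy =>
    intro r
    rw [mul_add, map_add, Subalgebra.coe_add, map_add]
    exact add_mem (hx r) (hy r)
  | smul s x _ hx => intro r; rw [smul_eq_mul, ← mul_assoc]; exact hx _

lemma mem_adjoin_of_isHomogeneous_succ
    (hC : ∀ c ∈ C, ∀ d, homogeneousComponent d c ∈ C)
    (π : MvPolynomial σ R →ₗ[C] C) (hπ : ∀ c : C, π c = c) {j : ℕ}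
    (hj : ∀ q : MvPolynomial σ R, q.IsHomogeneous j →
      q ∈ Ideal.span ((C : Set (MvPolynomial σ R)) ∩ {b | constantCoeff b = 0}))
    {c : MvPolynomial σ R} (hc : c ∈ C) (hcj : c.IsHomogeneous (j + 1)) :
    c ∈ Algebra.adjoin R (⋃ a < j + 1, {g ∈ C | g.IsHomogeneous a}) := by
  have hker := mem_ker_constantCoeff_mul_of_isHomogeneous
    (fun q hq => span_constantCoeff_eq_zero_le_span_isHomogeneous_pos hC (hj q hq)) hcj
  have hspan := homogeneousComponent_mem_span_of_mem_ker_constantCoeff_mul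
    (fun a t ht => ht.2.2) hker (j + 1)
  rw [homogeneousComponent_eq_self hcj] at hspan
  exact mem_adjoin_of_mem_span_of_isHomogeneous hC π hπ hc hcj hspan

end Subalgebra

end MvPolynomial

theorem generators_in_degrees_up_to_e_plus_one_general
    (k : Type) [Field k] (n : ℕ) (C : Subalgebra k (MvPolynomial (Fin n) k))
    -- `C` is a graded (homogeneous) subalgebra
    (hCgraded : ∀ c ∈ C, ∀ d : ℕ, homogeneousComponent d c ∈ C)
    -- the inclusion `C ↪ B` is split over `C`
    (hsplit : ∃ π : MvPolynomial (Fin n) k →ₗ[↥C] ↥C, ∀ c : ↥C, π (c : MvPolynomial (Fin n) k) = c)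
    -- `I := C₊ B` and `e` bounds the end of `B/I`:
    (e : ℕ)
    (he : ∀ j : ℕ, e < j → ∀ p : MvPolynomial (Fin n) k, p.IsHomogeneous j →
      p ∈ Ideal.span ((C : Set (MvPolynomial (Fin n) k)) ∩ {b | constantCoeff b = 0}))
    -- a set of homogeneous algebra generators of `C`
    (S : Set (MvPolynomial (Fin n) k))
    (hShom : ∀ s ∈ S, ∃ d : ℕ, s.IsHomogeneous d)
    (hSgen : Algebra.adjoin k S = C) :
    Algebra.adjoin k {s ∈ S | ∃ d ≤ e + 1, s.IsHomogeneous d} = C := by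
  obtain ⟨π, hπ⟩ := hsplit
  have hCd : ∀ d, ∀ c ∈ C, c.IsHomogeneous d →
      c ∈ Algebra.adjoin k {s ∈ S | ∃ d ≤ e + 1, s.IsHomogeneous d} := by
    intro d
    induction d using Nat.strong_induction_on with
    | _ d IH =>
    intro c hc hcd
    by_cases hd : d ≤ e + 1
    · have hlow := homogeneousComponent_mem_adjoin hShom (hSgen ▸ hc) d
      rw [homogeneousComponent_eq_self hcd] at hlow
      exact adjoin_setOf_isHomogeneous_le_mono hd hlow
    · obtain ⟨j, rfl⟩ : ∃ j, d = j + 1 := ⟨d - 1, by omega⟩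
      refine Algebra.adjoin_le ?_
        (mem_adjoin_of_isHomogeneous_succ hCgraded π hπ (he j (by omega)) hc hcd)
      simp only [Set.iUnion_subset_iff]
      exact fun a ha g hg => IH a ha g hg.1 hg.2
  refine le_antisymm (hSgen ▸ Algebra.adjoin_mono fun s hs => hs.1) fun c hc => ?_
  rw [← sum_homogeneousComponent c]
  exact Subalgebra.sum_mem _ fun i _ =>
    hCd i _ (hCgraded c hc i) (homogeneousComponent_isHomogeneous i c)

/-- let `B = k[x₁,…,xₙ]` be standard graded, `C ⊆ B` a graded subring such that
the inclusion `C ↪ B` is split as a map of `C`-modules, `I := C₊B` and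
`e := end (B/I) < ∞`. Then for any set of homogeneous algebra generators of `C`, the subset
of generators of degree at most `e + 1` already generates `C` as a `k`-algebra. -/
theorem generators_in_degrees_up_to_e_plus_one
    (k : Type) [Field k] (n : ℕ) (C : Subalgebra k (MvPolynomial (Fin n) k))
    -- `C` is a graded (homogeneous) subalgebra
    (hCgraded : ∀ c ∈ C, ∀ d : ℕ, homogeneousComponent d c ∈ C)
    -- the inclusion `C ↪ B` is split over `C`
    (hsplit : ∃ π : MvPolynomial (Fin n) k →ₗ[↥C] ↥C, ∀ c : ↥C, π (c : MvPolynomial (Fin n) k) = c)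
    -- `I := C₊ B` and `e` bounds the end of `B/I`:
    (e : ℕ)
    (he : ∀ j : ℕ, e < j → ∀ p : MvPolynomial (Fin n) k, p.IsHomogeneous j →
      p ∈ Ideal.span ((C : Set (MvPolynomial (Fin n) k)) ∩ {b | constantCoeff b = 0}))
    -- a set of homogeneous algebra generators of `C`
    (S : Set (MvPolynomial (Fin n) k)) (hSC : S ⊆ (C : Set (MvPolynomial (Fin n) k)))
    (hShom : ∀ s ∈ S, ∃ d : ℕ, s.IsHomogeneous d)
    (hSgen : Algebra.adjoin k S = C) :
    Algebra.adjoin k {s ∈ S | ∃ d ≤ e + 1, s.IsHomogeneous d} = C :=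
  generators_in_degrees_up_to_e_plus_one_general k n C hCgraded hsplit e he S hShom hSgen
end

section
/- Let $B$ be a standard graded polynomial ring over a field $k$ that is an integral domain of Krull dimension at least 2, $C \subseteq B$ a graded subring with the inclusion split over $C$, and $I := C_+ B$ with $e := \sup\{j : (B/I)_j \neq 0\} < \infty$. If moreover $t^B_1(I) \leq e + 1$, then any set of homogeneous algebra generators of $C$ contains a generating subset consisting of elements of degree at most $e$. -/
/-!
Write `𝔪 = RingHom.ker constantCoeff` for the irrelevant ideal of `B`. Using the retraction
`B → C` and taking homogeneous components, a homogeneous `c ∈ C` of degree `d` lying in `𝔪 I` is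
a combination of products of elements of `C` of positive degrees `< d`; so by induction on the
degree, `C` is generated in degrees `≤ e` as soon as `(I / 𝔪 I)_d = 0` for all `d > e`.

In degrees `≥ e + 2` this holds because `(B / I)_{>e} = 0`: a form of degree `d` is a sum of
variables times forms of degree `d - 1 > e`, which lie in `I`. In degree `e + 1` it means that no
minimal generator `f` of `I` has degree `e + 1`. If one did, a linear functional vanishing on
`𝔪 I` but not at `f` would produce, because the syzygies live in degrees `≤ e + 1`, a `B`-linear
map `I → B` sending `f` to a unit. Then `f` divides every element of `I`, in particular both
`x₁ ^ (e + 1)` and `x₂ ^ (e + 1)`, which is impossible for a form of degree `e + 1`.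
-/

open MvPolynomial

theorem Submodule.mem_span_image2_mul_of_mem_mul_span {R A : Type*} [CommSemiring R]
    [CommSemiring A] [Algebra R A] {P : Ideal A} {T : Set A} {z : A}
    (hz : z ∈ P * Ideal.span T) : z ∈ Submodule.span R (Set.image2 (· * ·) (P : Set A) T) := by
  refine Submodule.mul_induction_on hz (fun x hx y hy => ?_) fun _ _ => add_mem
  induction hy using Submodule.span_induction generalizing x with
  | mem y hy => exact Submodule.subset_span ⟨x, hx, y, hy, rfl⟩
  | zero => simp
  | add y y' _ _ ih ih' => rw [mul_add]; exact add_mem (ih x hx) (ih' x hx)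
  | smul b y _ ih =>
    rw [smul_eq_mul, ← mul_assoc]
    exact ih _ (P.mul_mem_right b hx)

theorem dvd_of_ker_linearCombination_le {R ι : Type*} [CommRing R] [Fintype ι] [DecidableEq ι]
    {f : ι → R} {Θ : (ι → R) →ₗ[R] R}
    (hΘ : LinearMap.ker (Fintype.linearCombination R f) ≤ LinearMap.ker Θ) {l : ι}
    (hl : IsUnit (Θ (Pi.single l 1))) {z : R} (hz : z ∈ Ideal.span (Set.range f)) : f l ∣ z := by
  obtain ⟨h, rfl⟩ := (Submodule.mem_span_range_iff_exists_fun R).1 hz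
  have hsyz : f l • h - (∑ i, h i • f i) • Pi.single l 1 ∈
      LinearMap.ker (Fintype.linearCombination R f) := by
    rw [LinearMap.mem_ker, map_sub, map_smul, map_smul, Fintype.linearCombination_apply_single,
      Fintype.linearCombination_apply, smul_eq_mul, smul_eq_mul, smul_eq_mul, one_mul, mul_comm,
      sub_self]
  have := hΘ hsyz
  rw [LinearMap.mem_ker, map_sub, map_smul, map_smul, sub_eq_zero, smul_eq_mul, smul_eq_mul] at this
  exact hl.dvd_mul_right.1 ⟨Θ h, this.symm⟩

namespace MvPolynomial

section CommSemiring

variable {σ R : Type*} [CommSemiring R]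

attribute [local instance] gradedAlgebra

theorem homogeneousComponent_mul (x y : MvPolynomial σ R) (d : ℕ) :
    homogeneousComponent d (x * y) = ∑ p ∈ Finset.HasAntidiagonal.antidiagonal d,
      homogeneousComponent p.1 x * homogeneousComponent p.2 y := by
  simp only [← decomposition.decompose'_apply]
  rw [← DirectSum.coe_mul_apply_eq_sum_antidiagonal]
  exact congrArg (fun z => (z d : MvPolynomial σ R))
    (DirectSum.decompose_mul (homogeneousSubmodule σ R) x y)

theorem IsHomogeneous.homogeneousComponent_mul_left {p : MvPolynomial σ R} {a : ℕ}
    (hp : p.IsHomogeneous a) (z : MvPolynomial σ R) (d : ℕ) :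
    homogeneousComponent d (p * z) = if a ≤ d then p * homogeneousComponent (d - a) z else 0 := by
  simp only [← decomposition.decompose'_apply]
  exact DirectSum.coe_decompose_mul_of_left_mem (homogeneousSubmodule σ R) d (b := z) hp

theorem IsHomogeneous.eq_C_of_degree_zero {p : MvPolynomial σ R} (hp : p.IsHomogeneous 0) :
    p = C (constantCoeff p) :=
  totalDegree_eq_zero_iff_eq_C.1 ((totalDegree_zero_iff_isHomogeneous σ).2 hp)

theorem IsHomogeneous.constantCoeff_eq_zero {p : MvPolynomial σ R} {a : ℕ}
    (hp : p.IsHomogeneous a) (ha : a ≠ 0) : constantCoeff p = 0 :=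
  hp.coeff_eq_zero (by simpa using ha.symm)

theorem IsHomogeneous.exists_eq_mul_C_of_dvd {f g : MvPolynomial σ R} {d : ℕ}
    (hf : f.IsHomogeneous d) (hg : g.IsHomogeneous d) (hfg : f ∣ g) :
    ∃ c, g = f * C c := by
  obtain ⟨q, rfl⟩ := hfg
  refine ⟨constantCoeff q, ?_⟩
  rw [← homogeneousComponent_eq_self hg, hf.homogeneousComponent_mul_left, if_pos le_rfl,
    Nat.sub_self, homogeneousComponent_zero, constantCoeff_eq]

theorem IsHomogeneous.eq_zero_of_dvd_X_pow_of_dvd_X_pow [Nontrivial R] {f : MvPolynomial σ R}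
    {t : ℕ} (hf : f.IsHomogeneous t) {i j : σ} (hij : i ≠ j) (hi : f ∣ X i ^ t)
    (hj : f ∣ X j ^ t) : t = 0 := by
  classical
  by_contra ht
  obtain ⟨a, ha⟩ := hf.exists_eq_mul_C_of_dvd (isHomogeneous_X_pow i t) hi
  obtain ⟨b, hb⟩ := hf.exists_eq_mul_C_of_dvd (isHomogeneous_X_pow j t) hj
  have hab : C b * X i ^ t = C a * X j ^ t := by rw [ha, hb]; ring
  have hne : Finsupp.single j t ≠ Finsupp.single i t := by
    rwa [Ne, Finsupp.single_left_inj ht, eq_comm]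
  have hb0 := congrArg (coeff (Finsupp.single i t)) hab
  rw [X_pow_eq_monomial, X_pow_eq_monomial, coeff_C_mul, coeff_C_mul, coeff_monomial,
    coeff_monomial, if_pos rfl, if_neg hne, mul_one, mul_zero] at hb0
  simp [X_pow_eq_monomial, hb0] at hb

theorem mem_ker_constantCoeff_mul_of_isHomogeneous_succ {I : Ideal (MvPolynomial σ R)} {d : ℕ}
    (hI : ∀ p : MvPolynomial σ R, p.IsHomogeneous d → p ∈ I) {p : MvPolynomial σ R}
    (hp : p.IsHomogeneous (d + 1)) : p ∈ RingHom.ker constantCoeff * I := by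
  have hsplit : homogeneousSubmodule σ R (d + 1) =
      homogeneousSubmodule σ R 1 * homogeneousSubmodule σ R d := by
    rw [← homogeneousSubmodule_one_pow, pow_succ', homogeneousSubmodule_one_pow]
  have hle : homogeneousSubmodule σ R 1 * homogeneousSubmodule σ R d ≤
      (RingHom.ker constantCoeff * I).restrictScalars R :=
    Submodule.mul_le.2 fun x hx y hy =>
      Ideal.mul_mem_mul ((hx : x.IsHomogeneous 1).constantCoeff_eq_zero one_ne_zero) (hI y hy)
  exact hle (hsplit ▸ hp)

theorem homogeneousComponent_mem_adjoin_of_mem_adjoin {S : Set (MvPolynomial σ R)}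
    (hS : ∀ s ∈ S, ∃ d, s.IsHomogeneous d) {x : MvPolynomial σ R} (hx : x ∈ Algebra.adjoin R S)
    {d e : ℕ} (hde : d ≤ e) :
    homogeneousComponent d x ∈ Algebra.adjoin R {s ∈ S | ∃ d' ≤ e, s.IsHomogeneous d'} := by
  induction hx using Algebra.adjoin_induction generalizing d with
  | mem s hs =>
    obtain ⟨a, ha⟩ := hS s hs
    rw [homogeneousComponent_of_mem ha]
    split_ifs with hda
    · exact Algebra.subset_adjoin ⟨hs, a, hda ▸ hde, ha⟩
    · exact zero_mem _
  | algebraMap r =>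
    rw [algebraMap_eq, homogeneousComponent_of_mem (isHomogeneous_C σ r)]
    split_ifs
    · exact Subalgebra.algebraMap_mem _ r
    · exact zero_mem _
  | add x y _ _ hx hy => rw [map_add]; exact add_mem (hx hde) (hy hde)
  | mul x y _ _ hx hy =>
    rw [homogeneousComponent_mul]
    refine Subalgebra.sum_mem _ fun p hp => ?_
    rw [Finset.HasAntidiagonal.mem_antidiagonal] at hp
    exact Subalgebra.mul_mem _ (hx (by omega)) (hy (by omega))

end CommSemiring

section Retraction

variable {σ R : Type*} [CommSemiring R] {C A : Subalgebra R (MvPolynomial σ R)}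

theorem homogeneousComponent_map_homogeneousComponent_mul_mem
    (hC : ∀ c ∈ C, ∀ d, homogeneousComponent d c ∈ C) (π : MvPolynomial σ R →ₗ[C] C) {d : ℕ}
    (hA : ∀ a < d, ∀ c ∈ C, c.IsHomogeneous a → c ∈ A) {t g : MvPolynomial σ R}
    (ht : constantCoeff t = 0) (hg : g ∈ C) (hg0 : constantCoeff g = 0) :
    homogeneousComponent d (π (homogeneousComponent d (t * g)) : MvPolynomial σ R) ∈ A := by
  rw [mul_comm, homogeneousComponent_mul, map_sum, AddSubmonoidClass.coe_finsetSum, map_sum]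
  refine Subalgebra.sum_mem _ fun ⟨a, b⟩ hab => ?_
  rw [Finset.HasAntidiagonal.mem_antidiagonal] at hab
  obtain rfl | ha := eq_or_ne a 0
  · simp [homogeneousComponent_zero, ← constantCoeff_eq, hg0]
  obtain rfl | hb := eq_or_ne b 0
  · simp [homogeneousComponent_zero, ← constantCoeff_eq, ht]
  have hga : homogeneousComponent a g ∈ C := hC g hg a
  have hπ : (π (homogeneousComponent a g * homogeneousComponent b t) : MvPolynomial σ R) =
      homogeneousComponent a g * π (homogeneousComponent b t) :=
    congrArg Subtype.val (π.map_smul ⟨_, hga⟩ (homogeneousComponent b t))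
  rw [hπ, (homogeneousComponent_isHomogeneous a g).homogeneousComponent_mul_left,
    if_pos (by omega), show d - a = b by omega]
  exact Subalgebra.mul_mem _ (hA a (by omega) _ hga (homogeneousComponent_isHomogeneous a g))
    (hA b (by omega) _ (hC _ (π _).2 b) (homogeneousComponent_isHomogeneous b _))

theorem mem_of_mem_ker_constantCoeff_mul_span
    (hC : ∀ c ∈ C, ∀ d, homogeneousComponent d c ∈ C) (π : MvPolynomial σ R →ₗ[C] C)
    (hπ : ∀ c : C, π c = c) {d : ℕ} (hA : ∀ a < d, ∀ c ∈ C, c.IsHomogeneous a → c ∈ A)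
    {c : MvPolynomial σ R} (hc : c ∈ C) (hcd : c.IsHomogeneous d)
    (hcm : c ∈ RingHom.ker constantCoeff *
      Ideal.span ((C : Set (MvPolynomial σ R)) ∩ {b | constantCoeff b = 0})) : c ∈ A := by
  let Φ : MvPolynomial σ R →ₗ[R] MvPolynomial σ R :=
    homogeneousComponent d ∘ₗ C.val.toLinearMap ∘ₗ π.restrictScalars R ∘ₗ homogeneousComponent d
  have hΦc : Φ c = c := by
    simp [Φ, homogeneousComponent_eq_self hcd, hπ ⟨c, hc⟩]
  have hle : Submodule.span R (Set.image2 (· * ·)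
      (RingHom.ker (constantCoeff : MvPolynomial σ R →+* R) : Set (MvPolynomial σ R))
      ((C : Set (MvPolynomial σ R)) ∩ {b | constantCoeff b = 0})) ≤
      (Subalgebra.toSubmodule A).comap Φ := by
    rw [Submodule.span_le]
    rintro _ ⟨t, ht, g, ⟨hg, hg0⟩, rfl⟩
    exact homogeneousComponent_map_homogeneousComponent_mul_mem hC π hA ht hg hg0
  exact hΦc ▸ hle (Submodule.mem_span_image2_mul_of_mem_mul_span hcm)

theorem adjoin_isHomogeneous_le_eq_of_isHomogeneous_mem_ker_constantCoeff_mul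
    (hC : ∀ c ∈ C, ∀ d, homogeneousComponent d c ∈ C) (π : MvPolynomial σ R →ₗ[C] C)
    (hπ : ∀ c : C, π c = c) {S : Set (MvPolynomial σ R)} (hSC : S ⊆ C)
    (hS : ∀ s ∈ S, ∃ d, s.IsHomogeneous d) (hSgen : Algebra.adjoin R S = C) {e : ℕ}
    (he : ∀ d, e < d → ∀ c ∈ C, c.IsHomogeneous d → c ∈ RingHom.ker constantCoeff *
      Ideal.span ((C : Set (MvPolynomial σ R)) ∩ {b | constantCoeff b = 0})) :
    Algebra.adjoin R {s ∈ S | ∃ d ≤ e, s.IsHomogeneous d} = C := by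
  have hhom (d : ℕ) : ∀ c ∈ C, c.IsHomogeneous d →
      c ∈ Algebra.adjoin R {s ∈ S | ∃ d ≤ e, s.IsHomogeneous d} := by
    induction d using Nat.strong_induction_on with
    | _ d ih =>
      intro c hc hcd
      rcases le_or_gt d e with hde | hed
      · rw [← homogeneousComponent_eq_self hcd]
        exact homogeneousComponent_mem_adjoin_of_mem_adjoin hS (hSgen ▸ hc) hde
      · exact mem_of_mem_ker_constantCoeff_mul_span hC π hπ ih hc hcd (he d hed c hc hcd)
  refine le_antisymm (Algebra.adjoin_le fun s hs => hSC hs.1) fun c hc => ?_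
  rw [← sum_homogeneousComponent c]
  exact Subalgebra.sum_mem _ fun d _ =>
    hhom d _ (hC c hc d) (homogeneousComponent_isHomogeneous d c)

end Retraction

section Syzygies

variable {σ R ι : Type*} [CommSemiring R]

/-- `τ` is homogeneous of degree `t` in the graded free module `⊕ₗ B(-dv l)`. -/
def IsHomogeneousOfShifts (dv : ι → ℕ) (τ : ι → MvPolynomial σ R) (t : ℕ) : Prop :=
  ∀ l, if dv l ≤ t then (τ l).IsHomogeneous (t - dv l) else τ l = 0

namespace IsHomogeneousOfShifts

variable {dv : ι → ℕ} {τ : ι → MvPolynomial σ R} {t : ℕ} {l : ι}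

theorem eq_zero_of_lt (hτ : IsHomogeneousOfShifts dv τ t) (hl : t < dv l) : τ l = 0 := by
  simpa [if_neg (not_le.2 hl)] using hτ l

theorem eq_C_of_eq (hτ : IsHomogeneousOfShifts dv τ t) (hl : dv l = t) :
    τ l = C (constantCoeff (τ l)) := by
  have h := hτ l
  rw [if_pos hl.le, hl, Nat.sub_self] at h
  exact h.eq_C_of_degree_zero

theorem constantCoeff_eq_zero_of_ne (hτ : IsHomogeneousOfShifts dv τ t) (hl : dv l ≠ t) :
    constantCoeff (τ l) = 0 := by
  have h := hτ l
  split_ifs at h with hle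
  · exact h.constantCoeff_eq_zero (by omega)
  · rw [h, map_zero]

end IsHomogeneousOfShifts

variable [Fintype ι] {f : ι → MvPolynomial σ R}

theorem isHomogeneous_mem_ker_constantCoeff_mul_span {dv : ι → ℕ}
    (hf : ∀ l, (f l).IsHomogeneous (dv l)) {t : ℕ}
    (hgen : ∀ l, dv l = t → f l ∈ RingHom.ker constantCoeff * Ideal.span (Set.range f))
    {p : MvPolynomial σ R} (hp : p.IsHomogeneous t) (hpI : p ∈ Ideal.span (Set.range f)) :
    p ∈ RingHom.ker constantCoeff * Ideal.span (Set.range f) := by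
  obtain ⟨h, rfl⟩ := (Submodule.mem_span_range_iff_exists_fun _).1 hpI
  rw [← homogeneousComponent_eq_self hp, map_sum]
  refine Ideal.sum_mem _ fun l _ => ?_
  rw [smul_eq_mul, mul_comm (h l), (hf l).homogeneousComponent_mul_left]
  split_ifs with hle
  · rcases hle.lt_or_eq with hlt | heq
    · rw [mul_comm (f l)]
      refine Ideal.mul_mem_mul ?_ (Ideal.subset_span ⟨l, rfl⟩)
      exact (homogeneousComponent_isHomogeneous _ _).constantCoeff_eq_zero (by omega)
    · exact Ideal.mul_mem_right _ _ (hgen l heq)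
  · exact zero_mem _

end Syzygies

section CommRing

variable {σ R ι : Type*} [CommRing R] [Fintype ι] {f : ι → MvPolynomial σ R}

theorem sum_constantCoeff_smul_mem_ker_constantCoeff_mul_span {τ : ι → MvPolynomial σ R}
    (hτ : ∑ l, τ l * f l = 0) :
    ∑ l, constantCoeff (τ l) • f l ∈ RingHom.ker constantCoeff * Ideal.span (Set.range f) := by
  have h : ∑ l, constantCoeff (τ l) • f l = -∑ l, (τ l - C (constantCoeff (τ l))) * f l := by
    simp [smul_eq_C_mul, sub_mul, Finset.sum_sub_distrib, hτ]
  rw [h]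
  refine neg_mem (Ideal.sum_mem _ fun l _ => Ideal.mul_mem_mul ?_ (Ideal.subset_span ⟨l, rfl⟩))
  simp [RingHom.mem_ker]

end CommRing

section Field

variable {σ k ι : Type*} [Field k] [Fintype ι] {f : ι → MvPolynomial σ k} {dv : ι → ℕ}

theorem sum_mul_C_eq_zero_of_isHomogeneousOfShifts {t tv : ℕ} (htv : tv ≤ t)
    {μ : MvPolynomial σ k →ₗ[k] k}
    (hμ : ∀ z ∈ RingHom.ker constantCoeff * Ideal.span (Set.range f), μ z = 0)
    {τ : ι → MvPolynomial σ k} (hτ : ∑ l, τ l * f l = 0) (hτhom : IsHomogeneousOfShifts dv τ tv) :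
    ∑ l, τ l * C (if dv l = t then μ (f l) else 0) = 0 := by
  rcases htv.lt_or_eq with hlt | rfl
  · refine Finset.sum_eq_zero fun l _ => ?_
    split_ifs with hl
    · rw [hτhom.eq_zero_of_lt (hl ▸ hlt), zero_mul]
    · rw [C_0, mul_zero]
  calc ∑ l, τ l * C (if dv l = tv then μ (f l) else 0)
      = ∑ l, C (μ (constantCoeff (τ l) • f l)) := by
        refine Finset.sum_congr rfl fun l _ => ?_
        by_cases hl : dv l = tv
        · rw [if_pos hl, map_smul, smul_eq_mul, C_mul, ← hτhom.eq_C_of_eq hl]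
        · rw [if_neg hl, C_0, mul_zero, hτhom.constantCoeff_eq_zero_of_ne hl, zero_smul, map_zero,
            C_0]
    _ = C (μ (∑ l, constantCoeff (τ l) • f l)) := by rw [map_sum, map_sum]
    _ = 0 := by rw [hμ _ (sum_constantCoeff_smul_mem_ker_constantCoeff_mul_span hτ), C_0]

theorem mem_ker_constantCoeff_mul_span_of_syzygies {κ : Type*}
    (hf : ∀ l, (f l).IsHomogeneous (dv l)) {t : ℕ} (ht : t ≠ 0) {syz : κ → ι → MvPolynomial σ k}
    {tv : κ → ℕ} (htv : ∀ a, tv a ≤ t) (hsyzhom : ∀ a, IsHomogeneousOfShifts dv (syz a) (tv a))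
    (hsyz : Submodule.span (MvPolynomial σ k) (Set.range syz) =
      LinearMap.ker (Fintype.linearCombination (MvPolynomial σ k) f))
    {i j : σ} (hij : i ≠ j) (hi : X i ^ t ∈ Ideal.span (Set.range f))
    (hj : X j ^ t ∈ Ideal.span (Set.range f)) {l₀ : ι} (hl₀ : dv l₀ = t) :
    f l₀ ∈ RingHom.ker constantCoeff * Ideal.span (Set.range f) := by
  classical
  by_contra hl₀m
  obtain ⟨μ, hμl₀, hμ⟩ := Submodule.exists_le_ker_of_notMem (K := k)
    (p := (RingHom.ker constantCoeff * Ideal.span (Set.range f)).restrictScalars k) hl₀m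
  -- `Θ` kills all syzygies, so it induces a map `I → B` sending `f l₀` to a unit.
  let Θ := Fintype.linearCombination (MvPolynomial σ k)
    fun l => (C (if dv l = t then μ (f l) else 0) : MvPolynomial σ k)
  have hΘ : LinearMap.ker (Fintype.linearCombination (MvPolynomial σ k) f) ≤ LinearMap.ker Θ := by
    rw [← hsyz, Submodule.span_le]
    rintro _ ⟨a, rfl⟩
    have ha : syz a ∈ LinearMap.ker (Fintype.linearCombination (MvPolynomial σ k) f) :=
      hsyz ▸ Submodule.subset_span ⟨a, rfl⟩
    rw [LinearMap.mem_ker, Fintype.linearCombination_apply] at ha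
    rw [SetLike.mem_coe, LinearMap.mem_ker, Fintype.linearCombination_apply]
    exact sum_mul_C_eq_zero_of_isHomogeneousOfShifts (htv a) (fun z hz => hμ hz) ha (hsyzhom a)
  have hunit : IsUnit (Θ (Pi.single l₀ 1)) := by
    simpa [Θ, Fintype.linearCombination_apply_single, hl₀] using
      (isUnit_iff_ne_zero.2 hμl₀).map (C : k →+* MvPolynomial σ k)
  exact ht ((hl₀ ▸ hf l₀).eq_zero_of_dvd_X_pow_of_dvd_X_pow hij
    (dvd_of_ker_linearCombination_le hΘ hunit hi) (dvd_of_ker_linearCombination_le hΘ hunit hj))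

theorem isHomogeneous_mem_ker_constantCoeff_mul_span_of_lt {κ : Type*}
    (hf : ∀ l, (f l).IsHomogeneous (dv l)) {e : ℕ}
    (he : ∀ d, e < d → ∀ p : MvPolynomial σ k, p.IsHomogeneous d → p ∈ Ideal.span (Set.range f))
    {syz : κ → ι → MvPolynomial σ k} {tv : κ → ℕ} (htv : ∀ a, tv a ≤ e + 1)
    (hsyzhom : ∀ a, IsHomogeneousOfShifts dv (syz a) (tv a))
    (hsyz : Submodule.span (MvPolynomial σ k) (Set.range syz) =
      LinearMap.ker (Fintype.linearCombination (MvPolynomial σ k) f))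
    {i j : σ} (hij : i ≠ j) {d : ℕ} (hd : e < d) {p : MvPolynomial σ k} (hp : p.IsHomogeneous d) :
    p ∈ RingHom.ker constantCoeff * Ideal.span (Set.range f) := by
  obtain ⟨d, rfl⟩ : ∃ d', d = d' + 1 := ⟨d - 1, by omega⟩
  rcases (Nat.lt_succ_iff.1 hd).lt_or_eq with hed | rfl
  · exact mem_ker_constantCoeff_mul_of_isHomogeneous_succ (he d hed) hp
  · have hX (i : σ) := he _ hd _ (isHomogeneous_X_pow i (e + 1))
    exact isHomogeneous_mem_ker_constantCoeff_mul_span hf (fun l hl =>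
      mem_ker_constantCoeff_mul_span_of_syzygies hf e.succ_ne_zero htv hsyzhom hsyz hij
        (hX i) (hX j) hl) hp (he _ hd p hp)

end Field

end MvPolynomial

/-- let `B = k[x₁,…,xₙ]` (`n ≥ 2`, so `B` is a domain of Krull dimension `≥ 2`)
be standard graded, `C ⊆ B` a graded subring with the inclusion split over `C`, `I := C₊B`,
`e := end (B/I) < ∞`.  If moreover `t¹_B(I) ≤ e + 1` (the ideal `I` has a homogeneous
generating family whose syzygy module is generated by homogeneous syzygies of degree at most
`e + 1`), then any set of homogeneous algebra generators of `C` contains a generating subset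
of elements of degree at most `e`. -/
theorem generators_in_degrees_up_to_e
    (k : Type) [Field k] (n : ℕ) (hn : 2 ≤ n) (C : Subalgebra k (MvPolynomial (Fin n) k))
    -- `C` is a graded (homogeneous) subalgebra
    (hCgraded : ∀ c ∈ C, ∀ d : ℕ, homogeneousComponent d c ∈ C)
    -- the inclusion `C ↪ B` is split over `C`
    (hsplit : ∃ π : MvPolynomial (Fin n) k →ₗ[↥C] ↥C, ∀ c : ↥C, π (c : MvPolynomial (Fin n) k) = c)
    (e : ℕ)
    (I : Ideal (MvPolynomial (Fin n) k))
    (hI : I = Ideal.span ((C : Set (MvPolynomial (Fin n) k)) ∩ {b | constantCoeff b = 0}))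
    -- `e` bounds the end of `B/I`
    (he : ∀ j : ℕ, e < j → ∀ p : MvPolynomial (Fin n) k, p.IsHomogeneous j → p ∈ I)
    -- `t¹_B(I) ≤ e + 1`: some homogeneous generating family of `I` has its syzygy module
    -- generated by homogeneous syzygies of degrees at most `e + 1`
    (hsyz : ∃ (r : ℕ) (f : Fin r → MvPolynomial (Fin n) k) (dv : Fin r → ℕ),
      (∀ l, (f l).IsHomogeneous (dv l)) ∧ Ideal.span (Set.range f) = I ∧
      ∃ (s : ℕ) (σ : Fin s → (Fin r → MvPolynomial (Fin n) k)) (tv : Fin s → ℕ),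
        (∀ a, tv a ≤ e + 1) ∧
        (∀ a l, if dv l ≤ tv a then (σ a l).IsHomogeneous (tv a - dv l) else σ a l = 0) ∧
        Submodule.span (MvPolynomial (Fin n) k) (Set.range σ)
          = LinearMap.ker (Fintype.linearCombination (MvPolynomial (Fin n) k)
              f))
    -- a set of homogeneous algebra generators of `C`
    (S : Set (MvPolynomial (Fin n) k)) (hSC : S ⊆ (C : Set (MvPolynomial (Fin n) k)))
    (hShom : ∀ s ∈ S, ∃ d : ℕ, s.IsHomogeneous d)
    (hSgen : Algebra.adjoin k S = C) :
    Algebra.adjoin k {s ∈ S | ∃ d ≤ e, s.IsHomogeneous d} = C := by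
  obtain ⟨π, hπ⟩ := hsplit
  obtain ⟨r, f, dv, hf, rfl, s, syz, tv, htv, hsyzhom, hsyz⟩ := hsyz
  have h01 : (⟨0, by omega⟩ : Fin n) ≠ ⟨1, by omega⟩ := by simp
  refine adjoin_isHomogeneous_le_eq_of_isHomogeneous_mem_ker_constantCoeff_mul hCgraded π hπ hSC
    hShom hSgen fun d hd c _ hcd => hI ▸ ?_
  exact isHomogeneous_mem_ker_constantCoeff_mul_span_of_lt hf he htv hsyzhom hsyz h01 hd hcd
end
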